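/- arXiv:1611.05157 — 2 statements merged into one kernel-verified Lean document; each statement's English description precedes it below -/
import Mathlib

section
/- Let G be a group and V a braided monoidal category. Given a family of comonoids (g(p), δ_p, ε_p) for p ∈ G, morphisms μ_{p,q} : g(p) ⊗ g(q) → g(pq) and η : 𝟙 → g(e) making g a semi-Hopf G-monoid (i.e. all μ_{p,q} and η are comonoid morphisms and (g, μ, η) is associative and unital), and an antipode family σ_p : g(p) → g(p⁻¹), the two antipode axioms μ_{p⁻¹,p} ∘ (σ_p ⊗ 1) ∘ δ_p = η ∘ ε_p (landing in g(e) via p⁻¹p = e) and μ_{p,p⁻¹} ∘ (1 ⊗ σ_p) ∘ δ_p = η ∘ ε_p are together equivalent to the bimonoid (g, μ, η, δ, ε) in the Zunino category being a Hopf monoid (i.e. the antipode axioms for the induced bimonoid hold). -/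
open CategoryTheory MonoidalCategory

set_option linter.unusedSectionVars false

universe v u

variable (V : Type u) [Category.{v} V] [MonoidalCategory V] [BraidedCategory V]

/-- An object of the Zunino category `Span|V(1,1)`: a set together with a
`V`-labelling of its elements. -/
structure ZObj : Type (max (u + 1) (v + 1)) where
  carrier : Type
  label : carrier → V

/-- A morphism of the Zunino category: a function between the underlying sets
together with a family of morphisms of `V` between the labels. -/
structure ZHom (A B : ZObj V) where
  map : A.carrier → B.carrier
  app : ∀ c, A.label c ⟶ B.label (map c)

theorem ZHom.ext' {A B : ZObj V} {f g : ZHom V A B} (h : f.map = g.map)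
    (h' : ∀ c, f.app c ≫ eqToHom (by rw [h]) = g.app c) : f = g := by
  obtain ⟨fm, fa⟩ := f
  obtain ⟨gm, ga⟩ := g
  dsimp at h
  subst h
  simp only [eqToHom_refl, Category.comp_id] at h'
  congr 1
  funext c
  exact h' c

instance : Category (ZObj V) where
  Hom := ZHom V
  id A := ⟨fun c => c, fun c => 𝟙 (A.label c)⟩
  comp f g := ⟨fun c => g.map (f.map c), fun c => f.app c ≫ g.app (f.map c)⟩
  id_comp f := ZHom.ext' V rfl (fun c => by simp)
  comp_id f := ZHom.ext' V rfl (fun c => by simp)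
  assoc f g h := ZHom.ext' V rfl (fun c => by simp)


@[simp] theorem ZHom.comp_app {A B C : ZObj V} (f : A ⟶ B) (g : B ⟶ C) (c : A.carrier) :
    (f ≫ g).app c = f.app c ≫ g.app (f.map c) := rfl

@[simp] theorem ZHom.id_app {A : ZObj V} (c : A.carrier) :
    (𝟙 A : A ⟶ A).app c = 𝟙 (A.label c) := rfl

@[simp] theorem ZHom.comp_map {A B C : ZObj V} (f : A ⟶ B) (g : B ⟶ C) (c : A.carrier) :
    (f ≫ g).map c = g.map (f.map c) := rfl

/-- The monoidal structure (data) of the Zunino category: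
`(B,b) ⊗ (A,a) = (B × A, (d,c) ↦ b d ⊗ a c)`, with unit the singleton set labelled
by the monoidal unit of `V`, and componentwise structure isomorphisms. -/
def zStruct : MonoidalCategoryStruct (ZObj V) where
  tensorObj A B := ⟨A.carrier × B.carrier, fun p => A.label p.1 ⊗ B.label p.2⟩
  whiskerLeft A _ _ f := ⟨fun p => (p.1, f.map p.2), fun p => A.label p.1 ◁ f.app p.2⟩
  whiskerRight f C := ⟨fun p => (f.map p.1, p.2), fun p => f.app p.1 ▷ C.label p.2⟩
  tensorHom f g := ⟨fun p => (f.map p.1, g.map p.2), fun p => f.app p.1 ⊗ₘ g.app p.2⟩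
  tensorUnit := ⟨PUnit, fun _ => 𝟙_ V⟩
  associator A B C :=
    { hom := ⟨fun p => (p.1.1, (p.1.2, p.2)), fun p => (α_ _ _ _).hom⟩
      inv := ⟨fun p => ((p.1, p.2.1), p.2.2), fun p => (α_ _ _ _).inv⟩
      hom_inv_id := ZHom.ext' V rfl (fun c => by simp)
      inv_hom_id := ZHom.ext' V rfl (fun c => by simp) }
  leftUnitor A :=
    { hom := ⟨fun p => p.2, fun p => (λ_ _).hom⟩
      inv := ⟨fun c => (PUnit.unit, c), fun c => (λ_ _).inv⟩
      hom_inv_id := ZHom.ext' V rfl (fun c => by simp)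
      inv_hom_id := ZHom.ext' V rfl (fun c => by simp) }
  rightUnitor A :=
    { hom := ⟨fun p => p.1, fun p => (ρ_ _).hom⟩
      inv := ⟨fun c => (c, PUnit.unit), fun c => (ρ_ _).inv⟩
      hom_inv_id := ZHom.ext' V rfl (fun c => by simp)
      inv_hom_id := ZHom.ext' V rfl (fun c => by simp) }

attribute [instance] zStruct
section HopfGroupMonoid

variable {G : Type} [Group G]
  -- a family of comonoids in `V` indexed by `G`
  (g : G → V) (δ : ∀ p, g p ⟶ g p ⊗ g p) (ε : ∀ p, g p ⟶ 𝟙_ V)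
  -- multiplication and unit morphisms
  (μ : ∀ p q : G, g p ⊗ g q ⟶ g (p * q)) (η : 𝟙_ V ⟶ g 1)
  -- the antipode family
  (σ : ∀ p : G, g p ⟶ g p⁻¹)

/-- The underlying Zunino object of a semi-Hopf `G`-monoid. -/
abbrev Zg : ZObj V := ⟨G, g⟩

/-- The Zunino multiplication. -/
def Zmul : (Zg V g ⊗ Zg V g : ZObj V) ⟶ Zg V g := ⟨fun p => p.1 * p.2, fun p => μ p.1 p.2⟩

/-- The Zunino unit. -/
def Zone : 𝟙_ (ZObj V) ⟶ Zg V g := ⟨fun _ => 1, fun _ => η⟩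

/-- The Zunino comultiplication (diagonal). -/
def Zcomul : Zg V g ⟶ (Zg V g ⊗ Zg V g : ZObj V) := ⟨fun p => (p, p), fun p => δ p⟩

/-- The Zunino counit. -/
def Zcounit : Zg V g ⟶ 𝟙_ (ZObj V) := ⟨fun _ => PUnit.unit, fun p => ε p⟩

/-- The Zunino antipode (inversion together with the family `σ`). -/
def ZS : Zg V g ⟶ Zg V g := ⟨fun p => p⁻¹, fun p => σ p⟩

/-! A Zunino morphism is a map of sets together with components, so the Zunino antipode
axioms say that `p ↦ p⁻¹ p` and `p ↦ p p⁻¹` are the constant map `1` (true in any group)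
and that the components agree; those components are exactly the `G`-graded antipode
axioms. -/

theorem ZHom.eq_iff_app {A B : ZObj V} {f f' : A ⟶ B} (h : f.map = f'.map) :
    f = f' ↔ ∀ c, f.app c ≫ eqToHom (by rw [h]) = f'.app c :=
  ⟨fun hf c => by subst hf; simp, ZHom.ext' V h⟩

theorem zunino_left_antipode_iff :
    Zcomul V g δ ≫ (ZS V g σ ⊗ₘ 𝟙 (Zg V g)) ≫ Zmul V g μ = Zcounit V g ε ≫ Zone V g η ↔
      ∀ p : G, δ p ≫ (σ p ⊗ₘ 𝟙 (g p)) ≫ μ p⁻¹ p ≫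
        eqToHom (congrArg g (inv_mul_cancel p)) = ε p ≫ η := by
  refine (ZHom.eq_iff_app V (funext inv_mul_cancel)).trans (forall_congr' fun p => ?_)
  -- Spelling out the `eqToHom` lets `simp` see the components through the semireducible `zStruct`.
  change (δ p ≫ (σ p ⊗ₘ 𝟙 (g p)) ≫ μ p⁻¹ p) ≫ eqToHom (congrArg g (inv_mul_cancel p)) =
    ε p ≫ η ↔ _
  simp only [Category.assoc]

theorem zunino_right_antipode_iff :
    Zcomul V g δ ≫ (𝟙 (Zg V g) ⊗ₘ ZS V g σ) ≫ Zmul V g μ = Zcounit V g ε ≫ Zone V g η ↔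
      ∀ p : G, δ p ≫ (𝟙 (g p) ⊗ₘ σ p) ≫ μ p p⁻¹ ≫
        eqToHom (congrArg g (mul_inv_cancel p)) = ε p ≫ η := by
  refine (ZHom.eq_iff_app V (funext mul_inv_cancel)).trans (forall_congr' fun p => ?_)
  change (δ p ≫ (𝟙 (g p) ⊗ₘ σ p) ≫ μ p p⁻¹) ≫ eqToHom (congrArg g (mul_inv_cancel p)) =
    ε p ≫ η ↔ _
  simp only [Category.assoc]

theorem hopfGroupMonoid_iff_zunino_hopf :
    ((∀ p : G, δ p ≫ (σ p ⊗ₘ 𝟙 (g p)) ≫ μ p⁻¹ p ≫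
          eqToHom (congrArg g (inv_mul_cancel p)) = ε p ≫ η) ∧
      (∀ p : G, δ p ≫ (𝟙 (g p) ⊗ₘ σ p) ≫ μ p p⁻¹ ≫
          eqToHom (congrArg g (mul_inv_cancel p)) = ε p ≫ η)) ↔
    (Zcomul V g δ ≫ (ZS V g σ ⊗ₘ 𝟙 (Zg V g)) ≫ Zmul V g μ =
        Zcounit V g ε ≫ Zone V g η ∧
      Zcomul V g δ ≫ (𝟙 (Zg V g) ⊗ₘ ZS V g σ) ≫ Zmul V g μ =
        Zcounit V g ε ≫ Zone V g η) :=
  ((zunino_left_antipode_iff V g δ ε μ η σ).and (zunino_right_antipode_iff V g δ ε μ η σ)).symm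

end HopfGroupMonoid
end

section
/- Let f be an opmonoidal monad on a monoidal category A (a monad (f, μ, η) with opmonoidal structure f₂ : f(X ⊗ Y) → f(X) ⊗ f(Y), f₀ : f(K) → K, all compatible). Then the Eilenberg–Moore category A^f carries a monoidal structure with (M, ρ) ⊗ (N, τ) having underlying object M ⊗ N and action f(M ⊗ N) → f(M) ⊗ f(N) → M ⊗ N, and unit (K, f₀), such that the forgetful functor A^f → A is strict monoidal. -/
/-!
The compatibility of `η` and `μ` with `δ` is exactly what makes `δ ≫ (ρ ⊗ τ)` satisfy the unit
and multiplication laws of an algebra, naturality of `δ` makes `f ⊗ g` an algebra map, and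
coassociativity and counitality of `δ` make the associator and unitors of `A` algebra maps.
The coherence axioms then hold in `A^T` because they hold in `A` and morphisms of algebras are
determined by their underlying morphisms.
-/

open CategoryTheory MonoidalCategory
open CategoryTheory.Functor (OplaxMonoidal)
open CategoryTheory.Functor.OplaxMonoidal

universe v u

namespace CategoryTheory

variable {C : Type*} [Category C] [MonoidalCategory C]

namespace Functor.OplaxMonoidal

variable {D : Type*} [Category D] [MonoidalCategory D] {F : C ⥤ D}

abbrev ofTensorHom (δ' : ∀ X Y : C, F.obj (X ⊗ Y) ⟶ F.obj X ⊗ F.obj Y)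
    (η' : F.obj (𝟙_ C) ⟶ 𝟙_ D)
    (natural : ∀ {X Y X' Y' : C} (f : X ⟶ X') (g : Y ⟶ Y'),
      F.map (f ⊗ₘ g) ≫ δ' X' Y' = δ' X Y ≫ (F.map f ⊗ₘ F.map g))
    (associativity : ∀ X Y Z : C,
      F.map (α_ X Y Z).hom ≫ δ' X (Y ⊗ Z) ≫ (𝟙 (F.obj X) ⊗ₘ δ' Y Z) =
        δ' (X ⊗ Y) Z ≫ (δ' X Y ⊗ₘ 𝟙 (F.obj Z)) ≫ (α_ (F.obj X) (F.obj Y) (F.obj Z)).hom)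
    (left_unitality : ∀ X : C,
      δ' (𝟙_ C) X ≫ (η' ⊗ₘ 𝟙 (F.obj X)) ≫ (λ_ (F.obj X)).hom = F.map (λ_ X).hom)
    (right_unitality : ∀ X : C,
      δ' X (𝟙_ C) ≫ (𝟙 (F.obj X) ⊗ₘ η') ≫ (ρ_ (F.obj X)).hom = F.map (ρ_ X).hom) :
    F.OplaxMonoidal where
  δ := δ'
  η := η'
  δ_natural_left f X' := by
    simpa [← tensorHom_id] using (natural f (𝟙 X')).symm
  δ_natural_right X' f := by
    simpa [← id_tensorHom] using (natural (𝟙 X') f).symm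
  oplax_associativity X Y Z := by
    simpa [← tensorHom_id, ← id_tensorHom] using (associativity X Y Z).symm
  oplax_left_unitality X := by
    rw [← cancel_mono (λ_ (F.obj X)).hom, Iso.inv_hom_id, Category.assoc, Category.assoc,
      ← tensorHom_id, left_unitality, ← F.map_comp, Iso.inv_hom_id, F.map_id]
  oplax_right_unitality X := by
    rw [← cancel_mono (ρ_ (F.obj X)).hom, Iso.inv_hom_id, Category.assoc, Category.assoc,
      ← id_tensorHom, right_unitality, ← F.map_comp, Iso.inv_hom_id, F.map_id]

end Functor.OplaxMonoidal

namespace Monad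

class IsOpmonoidal (T : Monad C) [T.toFunctor.OplaxMonoidal] : Prop where
  μ_tensor (X Y : C) : T.μ.app (X ⊗ Y) ≫ δ T.toFunctor X Y =
    T.map (δ T.toFunctor X Y) ≫ δ T.toFunctor (T.obj X) (T.obj Y) ≫ (T.μ.app X ⊗ₘ T.μ.app Y)
  μ_unit : T.μ.app (𝟙_ C) ≫ OplaxMonoidal.η T.toFunctor =
    T.map (OplaxMonoidal.η T.toFunctor) ≫ OplaxMonoidal.η T.toFunctor
  η_tensor (X Y : C) : T.η.app (X ⊗ Y) ≫ δ T.toFunctor X Y = T.η.app X ⊗ₘ T.η.app Y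
  η_unit : T.η.app (𝟙_ C) ≫ OplaxMonoidal.η T.toFunctor = 𝟙 (𝟙_ C)

namespace Algebra

variable {T : Monad C} [T.toFunctor.OplaxMonoidal] [T.IsOpmonoidal]

abbrev tensorObj (M N : T.Algebra) : T.Algebra where
  A := M.A ⊗ N.A
  a := δ T.toFunctor M.A N.A ≫ (M.a ⊗ₘ N.a)
  unit := by
    rw [← Category.assoc, IsOpmonoidal.η_tensor, tensorHom_comp_tensorHom, M.unit, N.unit]
    exact id_tensorHom_id _ _
  assoc := by
    rw [← Category.assoc, IsOpmonoidal.μ_tensor, Category.assoc, Category.assoc,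
      tensorHom_comp_tensorHom, M.assoc, N.assoc, ← tensorHom_comp_tensorHom, δ_natural_assoc,
      Functor.map_comp_assoc]

abbrev tensorUnit : T.Algebra where
  A := 𝟙_ C
  a := OplaxMonoidal.η T.toFunctor
  unit := IsOpmonoidal.η_unit
  assoc := IsOpmonoidal.μ_unit

def tensorHom {M N M' N' : T.Algebra} (f : M ⟶ M') (g : N ⟶ N') :
    tensorObj M N ⟶ tensorObj M' N' where
  f := f.f ⊗ₘ g.f
  h := by
    rw [← δ_natural_assoc, tensorHom_comp_tensorHom, f.h, g.h,
      Category.assoc, tensorHom_comp_tensorHom]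

def associator (M N K : T.Algebra) : tensorObj (tensorObj M N) K ≅ tensorObj M (tensorObj N K) :=
  Algebra.isoMk (α_ M.A N.A K.A) (by
    dsimp only
    rw [← whiskerLeft_comp_tensorHom, ← whiskerRight_comp_tensorHom, Category.assoc,
      Category.assoc, associator_naturality, associativity_assoc])

def leftUnitor (M : T.Algebra) : tensorObj tensorUnit M ≅ M :=
  Algebra.isoMk (λ_ M.A) (by
    simp [δ_comp_η_tensorHom_assoc])

def rightUnitor (M : T.Algebra) : tensorObj M tensorUnit ≅ M :=
  Algebra.isoMk (ρ_ M.A) (by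
    simp [δ_comp_tensorHom_η_assoc])

instance : MonoidalCategoryStruct T.Algebra where
  tensorObj := tensorObj
  tensorHom := tensorHom
  whiskerLeft M _ _ g := tensorHom (𝟙 M) g
  whiskerRight f K := tensorHom f (𝟙 K)
  tensorUnit := tensorUnit
  associator := associator
  leftUnitor := leftUnitor
  rightUnitor := rightUnitor

@[simp] lemma tensorObj_A (M N : T.Algebra) : (M ⊗ N).A = M.A ⊗ N.A := rfl

@[simp] lemma tensorUnit_A : (𝟙_ T.Algebra).A = 𝟙_ C := rfl

@[simp] lemma tensorHom_f {M N M' N' : T.Algebra} (f : M ⟶ M') (g : N ⟶ N') :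
    (f ⊗ₘ g).f = f.f ⊗ₘ g.f := rfl

@[simp] lemma associator_hom_f (M N K : T.Algebra) :
    (α_ M N K).hom.f = (α_ M.A N.A K.A).hom := rfl

@[simp] lemma leftUnitor_hom_f (M : T.Algebra) : (λ_ M).hom.f = (λ_ M.A).hom := rfl

@[simp] lemma rightUnitor_hom_f (M : T.Algebra) : (ρ_ M).hom.f = (ρ_ M.A).hom := rfl

instance : MonoidalCategory T.Algebra :=
  .ofTensorHom
    (id_tensorHom_id := fun _ _ => Hom.ext (id_tensorHom_id _ _))
    (id_tensorHom := fun _ _ _ _ => rfl)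
    (tensorHom_id := fun _ _ => rfl)
    (tensorHom_comp_tensorHom := fun _ _ _ _ => Hom.ext (tensorHom_comp_tensorHom _ _ _ _))
    (associator_naturality := fun _ _ _ => Hom.ext (associator_naturality _ _ _))
    (leftUnitor_naturality := fun _ => Hom.ext (by simp))
    (rightUnitor_naturality := fun _ => Hom.ext (by simp))
    (pentagon := fun _ _ _ _ => Hom.ext (by simp))
    (triangle := fun _ _ => Hom.ext (by simp))

end Algebra
end Monad
end CategoryTheory

theorem opmonoidalMonad_eilenbergMoore_monoidal
    {A : Type u} [Category.{v} A] [MonoidalCategory A] (T : Monad A)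
    (d2 : ∀ X Y : A, T.obj (X ⊗ Y) ⟶ T.obj X ⊗ T.obj Y)
    (d0 : T.obj (𝟙_ A) ⟶ 𝟙_ A)
    -- naturality of `d₂`
    (hnat : ∀ {X Y X' Y' : A} (f : X ⟶ X') (g : Y ⟶ Y'),
      T.map (f ⊗ₘ g) ≫ d2 X' Y' = d2 X Y ≫ (T.map f ⊗ₘ T.map g))
    -- coassociativity and counitality of the opmonoidal structure
    (hcoassoc : ∀ X Y Z : A,
      T.map (α_ X Y Z).hom ≫ d2 X (Y ⊗ Z) ≫ (𝟙 (T.obj X) ⊗ₘ d2 Y Z) =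
        d2 (X ⊗ Y) Z ≫ (d2 X Y ⊗ₘ 𝟙 (T.obj Z)) ≫ (α_ (T.obj X) (T.obj Y) (T.obj Z)).hom)
    (hcol : ∀ X : A, d2 (𝟙_ A) X ≫ (d0 ⊗ₘ 𝟙 (T.obj X)) ≫ (λ_ (T.obj X)).hom =
      T.map (λ_ X).hom)
    (hcor : ∀ X : A, d2 X (𝟙_ A) ≫ (𝟙 (T.obj X) ⊗ₘ d0) ≫ (ρ_ (T.obj X)).hom =
      T.map (ρ_ X).hom)
    -- `μ` and `η` are opmonoidal natural transformations
    (hμ2 : ∀ X Y : A, T.μ.app (X ⊗ Y) ≫ d2 X Y =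
      T.map (d2 X Y) ≫ d2 (T.obj X) (T.obj Y) ≫ (T.μ.app X ⊗ₘ T.μ.app Y))
    (hμ0 : T.μ.app (𝟙_ A) ≫ d0 = T.map d0 ≫ d0)
    (hη2 : ∀ X Y : A, T.η.app (X ⊗ Y) ≫ d2 X Y = (T.η.app X ⊗ₘ T.η.app Y))
    (hη0 : T.η.app (𝟙_ A) ≫ d0 = 𝟙 (𝟙_ A)) :
    ∃ M : MonoidalCategory T.Algebra,
      -- tensor product of algebras: underlying object `M ⊗ N`, with the action
      -- `T (M ⊗ N) ⟶ T M ⊗ T N ⟶ M ⊗ N`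
      (∀ m n : T.Algebra,
        (M.toMonoidalCategoryStruct.tensorObj m n).A = m.A ⊗ n.A ∧
        HEq (M.toMonoidalCategoryStruct.tensorObj m n).a (d2 m.A n.A ≫ (m.a ⊗ₘ n.a))) ∧
      -- unit object `(𝟙_A, d₀)`
      (M.toMonoidalCategoryStruct.tensorUnit.A = 𝟙_ A ∧
        HEq M.toMonoidalCategoryStruct.tensorUnit.a d0) ∧
      -- the forgetful functor is strict monoidal
      (∀ {m n m' n' : T.Algebra} (f : m ⟶ m') (g : n ⟶ n'),
        HEq (M.toMonoidalCategoryStruct.tensorHom f g).f (f.f ⊗ₘ g.f)) ∧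
      (∀ m n k : T.Algebra,
        HEq (M.toMonoidalCategoryStruct.associator m n k).hom.f (α_ m.A n.A k.A).hom) ∧
      (∀ m : T.Algebra,
        HEq (M.toMonoidalCategoryStruct.leftUnitor m).hom.f (λ_ m.A).hom) ∧
      (∀ m : T.Algebra,
        HEq (M.toMonoidalCategoryStruct.rightUnitor m).hom.f (ρ_ m.A).hom) := by
  let _ : T.toFunctor.OplaxMonoidal := .ofTensorHom d2 d0 hnat hcoassoc hcol hcor
  have : T.IsOpmonoidal := ⟨hμ2, hμ0, hη2, hη0⟩
  exact ⟨inferInstance, fun _ _ => ⟨rfl, .rfl⟩, ⟨rfl, .rfl⟩, fun _ _ => .rfl, fun _ _ _ => .rfl,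
    fun _ => .rfl, fun _ => .rfl⟩
end
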